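/- arXiv:0809.0533 — 2 statements merged into one kernel-verified Lean document; each statement's English description precedes it below -/
import Mathlib

section
/- Fix d ≥ 0, R_p, R_I > 0, and points a, b ∈ ℝ² with dist(a, b) = d. If r_I ≥ d + R_I + R_p, then Q(r_I) = ∫_{D(a, r_I + R_p) \ D(b, R_I)} S_I(‖x − a‖, R_p, r_I)/(π R_p²) dx = π(r_I² − R_I²), and hence for every μ > 0 the closed-form probability of opportunity satisfies F(r_I) = exp(−μ(Q(r_I) + π R_I²)) = exp(−μ π r_I²). -/
open MeasureTheory Metric Real

/-- `SI d r₁ r₂` is the area (two-dimensional Lebesgue measure) of the intersection of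
two closed disks in the plane of radii `r₁` and `r₂` whose centers are at distance `d`. -/
noncomputable def SI (d r₁ r₂ : ℝ) : ℝ :=
  (volume (closedBall (0 : EuclideanSpace ℝ (Fin 2)) r₁ ∩
    closedBall (EuclideanSpace.single (0 : Fin 2) d) r₂)).toReal

/-- The double integral `Q` appearing in the closed-form probability of opportunity. -/
noncomputable def Qfun (a b : EuclideanSpace ℝ (Fin 2)) (R_p R_I r_I : ℝ) : ℝ :=
  ∫ x in closedBall a (r_I + R_p) \ closedBall b R_I, SI ‖x - a‖ R_p r_I / (π * R_p ^ 2)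


/-!
After a translation and a reflection, `SI ‖x - a‖ R_p r_I` is the area `g x` of
`D(x, R_p) ∩ D(a, r_I)`. By Tonelli, `∫ g` over the plane is `π R_p² · π r_I²`: every point of
`D(a, r_I)` lies in `D(x, R_p)` for a disk of centres `x` of area `π R_p²`. Now `g` vanishes
outside `D(a, r_I + R_p)`, and `r_I ≥ d + R_I + R_p` gives `D(x, R_p) ⊆ D(a, r_I)`, hence
`g x = π R_p²`, for every `x ∈ D(b, R_I)`. Removing the integral over `D(b, R_I)` leaves
`π R_p² · π (r_I² − R_I²)`.
-/

section

variable {E : Type*} [NormedAddCommGroup E] [MeasurableSpace E] [BorelSpace E]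

theorem measure_closedBall_inter_closedBall_eq_sub (μ : Measure E) [μ.IsAddRightInvariant]
    (x y : E) (r s : ℝ) :
    μ (closedBall x r ∩ closedBall y s) = μ (closedBall 0 r ∩ closedBall (y - x) s) := by
  have : closedBall 0 r ∩ closedBall (y - x) s = (· + x) ⁻¹' (closedBall x r ∩ closedBall y s) := by
    ext z; simp [dist_eq_norm]
  rw [this, measure_preimage_add_right]

variable [SecondCountableTopology E] {s : Set E}

theorem measurableSet_setOf_mem_closedBall_inter (hs : MeasurableSet s) (r : ℝ) :
    MeasurableSet {p : E × E | p.2 ∈ closedBall p.1 r ∩ s} :=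
  (isClosed_le (by fun_prop) continuous_const).measurableSet.inter (measurable_snd hs)

theorem measurable_measure_closedBall_inter (μ : Measure E) [SFinite μ] (hs : MeasurableSet s)
    (r : ℝ) : Measurable fun x ↦ μ (closedBall x r ∩ s) :=
  measurable_measure_prodMk_left (measurableSet_setOf_mem_closedBall_inter hs r)

variable (μ : Measure E) [SFinite μ] [μ.IsAddHaarMeasure]

theorem lintegral_measure_closedBall_inter (hs : MeasurableSet s) (r : ℝ) :
    ∫⁻ x, μ (closedBall x r ∩ s) ∂μ = μ (closedBall 0 r) * μ s := by
  have hS := measurableSet_setOf_mem_closedBall_inter hs r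
  calc ∫⁻ x, μ (closedBall x r ∩ s) ∂μ
      = μ.prod μ {p : E × E | p.2 ∈ closedBall p.1 r ∩ s} := (Measure.prod_apply hS).symm
    _ = ∫⁻ y, s.indicator (fun _ ↦ μ (closedBall 0 r)) y ∂μ := by
      rw [Measure.prod_apply_symm hS]
      congr 1 with y
      by_cases hy : y ∈ s
      · have : (fun x ↦ (x, y)) ⁻¹' {p : E × E | p.2 ∈ closedBall p.1 r ∩ s} = closedBall y r := by
          ext x; simp [hy, dist_comm]
        rw [this, Set.indicator_of_mem hy, Measure.addHaar_closedBall_center]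
      · simp [hy]
    _ = μ (closedBall 0 r) * μ s := lintegral_indicator_const hs _

theorem setLIntegral_measure_closedBall_inter_diff_add {a b : E} {ρ r t : ℝ} (hρ : 0 ≤ ρ)
    (h : dist a b + t + ρ ≤ r) :
    ∫⁻ x in closedBall a (r + ρ) \ closedBall b t, μ (closedBall x ρ ∩ closedBall a r) ∂μ
        + μ (closedBall 0 ρ) * μ (closedBall b t) =
      μ (closedBall 0 ρ) * μ (closedBall a r) := by
  have hsub : closedBall b t ⊆ closedBall a (r + ρ) :=
    closedBall_subset_closedBall' (by rw [dist_comm]; linarith)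
  have hsupport : (fun x ↦ μ (closedBall x ρ ∩ closedBall a r)).support ⊆
      closedBall a (r + ρ) := by
    intro x hx
    by_contra hxa
    rw [mem_closedBall, not_le] at hxa
    have hdisj : Disjoint (closedBall x ρ) (closedBall a r) :=
      closedBall_disjoint_closedBall (by linarith)
    exact hx (by simp [hdisj.inter_eq])
  have hB : ∫⁻ x in closedBall b t, μ (closedBall x ρ ∩ closedBall a r) ∂μ =
      μ (closedBall 0 ρ) * μ (closedBall b t) := by
    rw [← setLIntegral_const]
    refine setLIntegral_congr_fun measurableSet_closedBall fun x hx ↦ ?_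
    have hxa : ρ + dist x a ≤ r := by
      linarith [dist_triangle x b a, mem_closedBall.1 hx, dist_comm a b]
    rw [Set.inter_eq_self_of_subset_left (closedBall_subset_closedBall' hxa),
      Measure.addHaar_closedBall_center]
  rw [← hB, ← lintegral_union measurableSet_closedBall Set.disjoint_sdiff_left,
    Set.sdiff_union_of_subset hsub, setLIntegral_eq_of_support_subset hsupport,
    lintegral_measure_closedBall_inter μ measurableSet_closedBall]

end

theorem volume_closedBall_zero_inter_closedBall_congr {E : Type*} [NormedAddCommGroup E]
    [InnerProductSpace ℝ E] [FiniteDimensional ℝ E] [MeasurableSpace E] [BorelSpace E]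
    {u v : E} (h : ‖u‖ = ‖v‖) (r s : ℝ) :
    volume (closedBall 0 r ∩ closedBall u s) = volume (closedBall 0 r ∩ closedBall v s) := by
  set f := (ℝ ∙ (u - v))ᗮ.reflection
  have hfv : f.symm v = u := f.symm_apply_eq.2 (Submodule.reflection_sub h).symm
  have hpre : f ⁻¹' (closedBall 0 r ∩ closedBall v s) = closedBall 0 r ∩ closedBall u s := by
    rw [Set.preimage_inter, LinearIsometryEquiv.preimage_closedBall,
      LinearIsometryEquiv.preimage_closedBall, map_zero, hfv]
  rw [← hpre, f.measurePreserving.measure_preimage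
    (measurableSet_closedBall.inter measurableSet_closedBall).nullMeasurableSet]

theorem SI_norm_sub (x a : EuclideanSpace ℝ (Fin 2)) (r s : ℝ) :
    SI ‖x - a‖ r s = volume.real (closedBall x r ∩ closedBall a s) := by
  rw [measureReal_def, measure_closedBall_inter_closedBall_eq_sub, SI,
    volume_closedBall_zero_inter_closedBall_congr]
  simp [norm_sub_rev]

theorem Qfun_eq_of_add_le {a b : EuclideanSpace ℝ (Fin 2)} {R_p R_I r_I : ℝ} (hRp : 0 < R_p)
    (hRI : 0 ≤ R_I) (h : dist a b + R_I + R_p ≤ r_I) :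
    Qfun a b R_p R_I r_I = π * (r_I ^ 2 - R_I ^ 2) := by
  have hrI : 0 ≤ r_I := by linarith [dist_nonneg (x := a) (y := b)]
  have key := setLIntegral_measure_closedBall_inter_diff_add volume hRp.le h
  simp only [EuclideanSpace.volume_closedBall_fin_two] at key
  have hfin := (le_self_add.trans_lt (key.trans_lt (by finiteness : _ < ⊤))).ne
  have key_real := congrArg ENNReal.toReal key
  rw [ENNReal.toReal_add hfin (by finiteness)] at key_real
  simp only [ENNReal.toReal_mul, ENNReal.toReal_pow, ENNReal.toReal_ofReal, hRp.le, hRI, hrI,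
    pi_nonneg] at key_real
  have hfinite : ∀ x, volume (closedBall x R_p ∩ closedBall a r_I) < ⊤ := fun x ↦
    (measure_mono Set.inter_subset_left).trans_lt measure_closedBall_lt_top
  simp_rw [Qfun, SI_norm_sub, measureReal_def]
  rw [integral_div, integral_toReal
    (measurable_measure_closedBall_inter volume measurableSet_closedBall R_p).aemeasurable
    (ae_of_all _ hfinite),
    div_eq_iff (by positivity)]
  linear_combination key_real

theorem probOpp_high_power_general (d R_p R_I : ℝ)
    (hRp : 0 < R_p) (hRI : 0 < R_I)
    (a b : EuclideanSpace ℝ (Fin 2)) (hab : dist a b = d)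
    (r_I : ℝ) (h : d + R_I + R_p ≤ r_I) :
    Qfun a b R_p R_I r_I = π * (r_I ^ 2 - R_I ^ 2) ∧
    ∀ μ : ℝ, 0 < μ →
      Real.exp (-μ * (Qfun a b R_p R_I r_I + π * R_I ^ 2)) =
        Real.exp (-(μ * (π * r_I ^ 2))) := by
  have hQ : Qfun a b R_p R_I r_I = π * (r_I ^ 2 - R_I ^ 2) :=
    Qfun_eq_of_add_le hRp hRI.le (hab ▸ h)
  refine ⟨hQ, fun μ _ ↦ ?_⟩
  rw [hQ]
  ring_nf

/-- Equality case of T1.2: if `r_I ≥ d + R_I + R_p` then `Q(r_I) = π(r_I² − R_I²)`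
and hence `F(r_I) = exp(−μπ r_I²)` for every `μ > 0`. -/
theorem probOpp_high_power (d R_p R_I : ℝ)
    (hd : 0 ≤ d) (hRp : 0 < R_p) (hRI : 0 < R_I)
    (a b : EuclideanSpace ℝ (Fin 2)) (hab : dist a b = d)
    (r_I : ℝ) (h : d + R_I + R_p ≤ r_I) :
    Qfun a b R_p R_I r_I = π * (r_I ^ 2 - R_I ^ 2) ∧
    ∀ μ : ℝ, 0 < μ →
      Real.exp (-μ * (Qfun a b R_p R_I r_I + π * R_I ^ 2)) =
        Real.exp (-(μ * (π * r_I ^ 2))) :=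
  probOpp_high_power_general d R_p R_I hRp hRI a b hab r_I h
end

section
/- Fix r_I, R_p > 0 and r_D ≥ 0. With J(r_D) = ∫₀^{r_D} 2 t · S_I(t, r_I, R_p)/(π R_p²) dt, the function μ ↦ exp(−μ π r_D²) · (1 − exp(−μ π (r_I² − J(r_D))))/(1 − exp(−μ π r_I²)) is nonincreasing on (0, ∞); i.e., the closed-form collision probability P_C decreases as the primary traffic intensity μ = pλ increases. -/
open MeasureTheory Metric Real

/-- `J(r_D) = ∫₀^{r_D} 2 t · S_I(t, r_I, R_p)/(π R_p²) dt`. -/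
noncomputable def Jfun (r_I R_p r_D : ℝ) : ℝ :=
  ∫ t in (0:ℝ)..r_D, 2 * t * SI t r_I R_p / (π * R_p ^ 2)

/-!
Put `A = π r_D²`, `C = π r_I²`, `B = C - π J(r_D)`. For `μ > 0` the function equals
`e^{-μ (A - πJ)} · (1 - φ μ)` with `φ μ = (1 - e^{-μ πJ}) / (1 - e^{-μ C})`. The first factor is
antitone because `J(r_D) ≤ r_D²` (as `S_I ≤ π R_p²`). For `0 ≤ πJ ≤ C` the ratio `φ` is at most `1`
and monotone: the sign of its derivative is that of `C (e^{μπJ} - 1) ≤ πJ (e^{μC} - 1)`, i.e. of the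
monotonicity of the secant slopes `(e^x - 1) / x` of the convex function `exp`.

The bound `J(r_D) ≤ r_I²` is the integral of `S_I` over the whole plane in polar coordinates:
`S_I(‖x‖, r_I, R_p)` is the area of `B(0, r_I) ∩ B(x, R_p)` (rotate `x` onto the first axis), and
integrating that area over `x` gives `|B(0, r_I)| · |B(0, R_p)|` by Fubini.
-/

open Pointwise

section Translates

variable {G : Type*} [AddCommGroup G] {s t : Set G}

theorem prodMk_preimage_setOf_sub_mem (x : G) :
    Prod.mk x ⁻¹' {p : G × G | p.2 ∈ s ∧ p.2 - p.1 ∈ t} = s ∩ (x +ᵥ t) := by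
  ext y; simp [Set.mem_vadd_set_iff_neg_vadd_mem, neg_add_eq_sub]

variable [MeasurableSpace G] [MeasurableAdd₂ G] [MeasurableNeg G]

theorem measurableSet_setOf_sub_mem (hs : MeasurableSet s) (ht : MeasurableSet t) :
    MeasurableSet {p : G × G | p.2 ∈ s ∧ p.2 - p.1 ∈ t} :=
  (measurable_snd hs).inter (ht.preimage (measurable_snd.sub measurable_fst))

theorem measurable_measure_inter_vadd (μ : Measure G) [SFinite μ] (hs : MeasurableSet s)
    (ht : MeasurableSet t) : Measurable fun x : G ↦ μ (s ∩ (x +ᵥ t)) := by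
  simpa only [prodMk_preimage_setOf_sub_mem] using
    measurable_measure_prodMk_left (ν := μ) (measurableSet_setOf_sub_mem hs ht)

theorem lintegral_measure_inter_vadd (μ : Measure G) [SFinite μ]
    [μ.IsAddLeftInvariant] [μ.IsNegInvariant] (hs : MeasurableSet s) (ht : MeasurableSet t) :
    ∫⁻ x, μ (s ∩ (x +ᵥ t)) ∂μ = μ s * μ t := by
  set S : Set (G × G) := {p | p.2 ∈ s ∧ p.2 - p.1 ∈ t}
  have hS : MeasurableSet S := measurableSet_setOf_sub_mem hs ht
  have hsec : ∀ y, μ ((·, y) ⁻¹' S) = s.indicator (fun _ ↦ μ t) y := fun y ↦ by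
    by_cases hy : y ∈ s
    · simpa [S, hy, Set.preimage] using
        (Measure.measurePreserving_sub_left μ y).measure_preimage ht.nullMeasurableSet
    · simp [S, hy]
  calc ∫⁻ x, μ (s ∩ (x +ᵥ t)) ∂μ = μ.prod μ S := by
        simp_rw [Measure.prod_apply hS, S, prodMk_preimage_setOf_sub_mem]
    _ = μ t * μ s := by simp_rw [Measure.prod_apply_symm hS, hsec, lintegral_indicator_const hs]
    _ = μ s * μ t := mul_comm _ _

end Translates

theorem volume_closedBall_inter_closedBall_of_norm_eq {E : Type*} [NormedAddCommGroup E]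
    [InnerProductSpace ℝ E] [FiniteDimensional ℝ E] [MeasurableSpace E] [BorelSpace E]
    {x y : E} (hxy : ‖x‖ = ‖y‖) (r₁ r₂ : ℝ) :
    volume (closedBall 0 r₁ ∩ closedBall x r₂) = volume (closedBall 0 r₁ ∩ closedBall y r₂) := by
  set e := Submodule.reflection (ℝ ∙ (y - x))ᗮ
  have hx : e.symm x = y := by
    rw [LinearIsometryEquiv.symm_apply_eq, Submodule.reflection_sub hxy.symm]
  rw [← e.measurePreserving.measure_preimage
    (measurableSet_closedBall.inter measurableSet_closedBall).nullMeasurableSet,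
    Set.preimage_inter, e.preimage_closedBall, e.preimage_closedBall, map_zero, hx]

local notation "ℝ²" => EuclideanSpace ℝ (Fin 2)

theorem SI_norm (x : ℝ²) (r₁ r₂ : ℝ) :
    SI ‖x‖ r₁ r₂ = (volume (closedBall 0 r₁ ∩ closedBall x r₂)).toReal := by
  rw [SI, volume_closedBall_inter_closedBall_of_norm_eq (x := x)]
  simp

theorem SI_nonneg (d r₁ r₂ : ℝ) : 0 ≤ SI d r₁ r₂ := ENNReal.toReal_nonneg

theorem SI_le {d r₁ r₂ : ℝ} (h₂ : 0 ≤ r₂) : SI d r₁ r₂ ≤ π * r₂ ^ 2 := by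
  have h := measure_mono (μ := volume) (Set.inter_subset_right (s := closedBall (0 : ℝ²) r₁)
    (t := closedBall (EuclideanSpace.single 0 d) r₂))
  rw [EuclideanSpace.volume_closedBall_fin_two] at h
  simpa [SI, ENNReal.toReal_ofReal h₂, pi_nonneg, mul_comm] using
    ENNReal.toReal_mono (by finiteness) h

theorem integrable_SI_norm_and_integral {r₁ r₂ : ℝ} (h₁ : 0 ≤ r₁) (h₂ : 0 ≤ r₂) :
    Integrable (fun x : ℝ² ↦ SI ‖x‖ r₁ r₂) ∧
      ∫ x : ℝ², SI ‖x‖ r₁ r₂ = π * r₁ ^ 2 * (π * r₂ ^ 2) := by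
  have hmeas : Measurable fun x : ℝ² ↦ volume (closedBall 0 r₁ ∩ closedBall x r₂) := by
    simpa only [vadd_closedBall_zero] using
      measurable_measure_inter_vadd (s := closedBall (0 : ℝ²) r₁) (t := closedBall 0 r₂) volume
        measurableSet_closedBall measurableSet_closedBall
  have hlint : ∫⁻ x : ℝ², volume (closedBall 0 r₁ ∩ closedBall x r₂) =
      volume (closedBall (0 : ℝ²) r₁) * volume (closedBall (0 : ℝ²) r₂) := by
    simpa only [vadd_closedBall_zero] using
      lintegral_measure_inter_vadd (s := closedBall (0 : ℝ²) r₁) (t := closedBall 0 r₂) volume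
        measurableSet_closedBall measurableSet_closedBall
  have hfin : ∫⁻ x : ℝ², volume (closedBall 0 r₁ ∩ closedBall x r₂) ≠ ⊤ := by
    simp [hlint, ENNReal.mul_eq_top]
  simp_rw [SI_norm]
  refine ⟨integrable_toReal_of_lintegral_ne_top hmeas.aemeasurable hfin, ?_⟩
  rw [integral_toReal hmeas.aemeasurable (ae_lt_top hmeas hfin), hlint]
  simp [ENNReal.toReal_ofReal, h₁, h₂, pi_nonneg]
  ring

theorem integrableOn_mul_SI_and_integral {r₁ r₂ : ℝ} (h₁ : 0 ≤ r₁) (h₂ : 0 ≤ r₂) :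
    IntegrableOn (fun t ↦ t * SI t r₁ r₂) (Set.Ioi 0) ∧
      ∫ t in Set.Ioi 0, t * SI t r₁ r₂ = π * r₁ ^ 2 * r₂ ^ 2 / 2 := by
  obtain ⟨hint, hval⟩ := integrable_SI_norm_and_integral h₁ h₂
  have hball : volume.real (ball (0 : ℝ²) 1) = π := by simp [measureReal_def, pi_nonneg]
  rw [integrable_fun_norm_addHaar volume (f := fun y ↦ SI y r₁ r₂)] at hint
  rw [integral_fun_norm_addHaar volume (fun y ↦ SI y r₁ r₂), hball] at hval
  norm_num [finrank_euclideanSpace_fin] at hint hval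
  refine ⟨hint, mul_left_cancel₀ pi_ne_zero ?_⟩
  linarith

section Jfun

variable {r_I R_p r_D : ℝ}

theorem Jfun_eq_setIntegral (hrD : 0 ≤ r_D) :
    Jfun r_I R_p r_D = 2 / (π * R_p ^ 2) * ∫ t in Set.Ioc 0 r_D, t * SI t r_I R_p := by
  rw [Jfun, intervalIntegral.integral_of_le hrD, ← integral_const_mul]
  congr 1 with t
  ring

theorem Jfun_nonneg (hrD : 0 ≤ r_D) : 0 ≤ Jfun r_I R_p r_D := by
  rw [Jfun_eq_setIntegral hrD]
  exact mul_nonneg (by positivity) <|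
    setIntegral_nonneg measurableSet_Ioc fun t ht ↦ mul_nonneg ht.1.le (SI_nonneg _ _ _)

theorem Jfun_le_rD_sq (hRp : 0 ≤ R_p) (hrD : 0 ≤ r_D) : Jfun r_I R_p r_D ≤ r_D ^ 2 := by
  have hle : ∀ t ∈ Set.Ioc 0 r_D, 2 * t * SI t r_I R_p / (π * R_p ^ 2) ≤ 2 * t := fun t ht ↦
    div_le_of_le_mul₀ (by positivity) (by linarith [ht.1]) <|
      mul_le_mul_of_nonneg_left (SI_le hRp) (by linarith [ht.1])
  calc Jfun r_I R_p r_D = ∫ t in Set.Ioc 0 r_D, 2 * t * SI t r_I R_p / (π * R_p ^ 2) := by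
        rw [Jfun, intervalIntegral.integral_of_le hrD]
    _ ≤ ∫ t in Set.Ioc 0 r_D, 2 * t := by
        refine integral_mono_of_nonneg ?_ (continuous_const.mul continuous_id).integrableOn_Ioc
          ((ae_restrict_iff' measurableSet_Ioc).2 (.of_forall hle))
        exact (ae_restrict_iff' measurableSet_Ioc).2 (.of_forall fun t ht ↦
          div_nonneg (mul_nonneg (by linarith [ht.1]) (SI_nonneg _ _ _)) (by positivity))
    _ = r_D ^ 2 := by
        rw [← intervalIntegral.integral_of_le hrD, intervalIntegral.integral_const_mul, integral_id]
        ring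

theorem Jfun_le_rI_sq (hrI : 0 ≤ r_I) (hRp : 0 < R_p) (hrD : 0 ≤ r_D) :
    Jfun r_I R_p r_D ≤ r_I ^ 2 := by
  obtain ⟨hint, hval⟩ := integrableOn_mul_SI_and_integral hrI hRp.le
  calc Jfun r_I R_p r_D ≤ 2 / (π * R_p ^ 2) * ∫ t in Set.Ioi 0, t * SI t r_I R_p := by
        rw [Jfun_eq_setIntegral hrD]
        refine mul_le_mul_of_nonneg_left (setIntegral_mono_set hint ?_
          Set.Ioc_subset_Ioi_self.eventuallyLE) (by positivity)
        exact (ae_restrict_iff' measurableSet_Ioi).2 (.of_forall fun t ht ↦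
          mul_nonneg (le_of_lt ht) (SI_nonneg _ _ _))
    _ = r_I ^ 2 := by
        rw [hval]
        field_simp

end Jfun

theorem mul_exp_sub_one_le_of_le {x y : ℝ} (hx : 0 ≤ x) (hxy : x ≤ y) :
    y * (exp x - 1) ≤ x * (exp y - 1) := by
  rcases hx.eq_or_lt with rfl | hx
  · simp
  have hy := hx.trans_le hxy
  have hslope := convexOn_exp.secant_mono (Set.mem_univ 0) (Set.mem_univ x) (Set.mem_univ y)
    hx.ne' hy.ne' hxy
  rw [exp_zero, sub_zero, sub_zero, div_le_div_iff₀ hx hy] at hslope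
  linarith

theorem one_sub_exp_neg_mul_pos {μ C : ℝ} (hμ : 0 < μ) (hC : 0 < C) : 0 < 1 - exp (-μ * C) :=
  sub_pos.2 <| exp_lt_one_iff.2 <| mul_neg_of_neg_of_pos (neg_neg_of_pos hμ) hC

theorem monotoneOn_one_sub_exp_div_one_sub_exp {d C : ℝ} (hd : 0 ≤ d) (hdC : d ≤ C)
    (hC : 0 < C) :
    MonotoneOn (fun μ ↦ (1 - exp (-μ * d)) / (1 - exp (-μ * C))) (Set.Ioi 0) := by
  have hexp : ∀ (k μ : ℝ), HasDerivAt (fun μ ↦ 1 - exp (-μ * k)) (k * exp (-μ * k)) μ :=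
    fun k μ ↦ (((hasDerivAt_neg μ).mul_const k).exp.const_sub 1).congr_deriv (by ring)
  have hderiv : ∀ μ ∈ Set.Ioi (0 : ℝ),
      HasDerivAt (fun μ ↦ (1 - exp (-μ * d)) / (1 - exp (-μ * C)))
      ((d * exp (-μ * d) * (1 - exp (-μ * C)) - (1 - exp (-μ * d)) * (C * exp (-μ * C))) /
        (1 - exp (-μ * C)) ^ 2) μ :=
    fun μ hμ ↦ (hexp d μ).div (hexp C μ) (one_sub_exp_neg_mul_pos hμ hC).ne'
  refine monotoneOn_of_deriv_nonneg (convex_Ioi 0)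
    (fun μ hμ ↦ (hderiv μ hμ).continuousAt.continuousWithinAt) ?_ ?_ <;> rw [interior_Ioi]
  · exact fun μ hμ ↦ (hderiv μ hμ).differentiableAt.differentiableWithinAt
  intro μ (hμ : 0 < μ)
  rw [(hderiv μ hμ).deriv]
  refine div_nonneg (sub_nonneg.2 ?_) (sq_nonneg _)
  have key := mul_exp_sub_one_le_of_le (by positivity : 0 ≤ μ * d)
    (mul_le_mul_of_nonneg_left hdC hμ.le)
  -- with `exp (-t) = (exp t)⁻¹` cleared, the goal is `key` divided by `μ`
  rw [neg_mul, neg_mul, exp_neg, exp_neg]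
  field_simp
  nlinarith

theorem antitoneOn_exp_mul_one_sub_exp_div_one_sub_exp {A B C : ℝ} (hB : 0 ≤ B) (hBC : B ≤ C)
    (hC : 0 < C) (hCAB : C ≤ A + B) :
    AntitoneOn (fun μ ↦ exp (-μ * A) * (1 - exp (-μ * B)) / (1 - exp (-μ * C))) (Set.Ioi 0) := by
  set φ := fun μ ↦ (1 - exp (-μ * (C - B))) / (1 - exp (-μ * C))
  have hφ : MonotoneOn φ (Set.Ioi 0) :=
    monotoneOn_one_sub_exp_div_one_sub_exp (sub_nonneg.2 hBC) (by linarith) hC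
  have hφ_le_one : ∀ μ ∈ Set.Ioi (0 : ℝ), φ μ ≤ 1 := fun μ hμ ↦ by
    refine div_le_one_of_le₀ (sub_le_sub_left (exp_le_exp.2 ?_) 1)
      (one_sub_exp_neg_mul_pos hμ hC).le
    nlinarith [Set.mem_Ioi.1 hμ]
  have heq : Set.EqOn (fun μ ↦ exp (-μ * (A - (C - B))) * (1 - φ μ))
      (fun μ ↦ exp (-μ * A) * (1 - exp (-μ * B)) / (1 - exp (-μ * C))) (Set.Ioi 0) :=
    fun μ hμ ↦ by
      simp only [φ]
      rw [one_sub_div (one_sub_exp_neg_mul_pos hμ hC).ne', mul_div_assoc']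
      congr 1
      simp only [mul_sub, mul_one, ← exp_add]
      ring_nf
  refine AntitoneOn.congr (fun a ha b hb hab ↦ ?_) heq
  exact mul_le_mul (exp_le_exp.2 (by nlinarith)) (sub_le_sub_left (hφ ha hb hab) 1)
    (sub_nonneg.2 (hφ_le_one b hb)) (exp_pos _).le

/-- The closed-form collision probability `P_C` (Proposition 3, eq. (14)) is
nonincreasing in the traffic intensity `μ = pλ` on `(0, ∞)`. -/
theorem pC_anti_in_traffic (r_I R_p r_D : ℝ)
    (hrI : 0 < r_I) (hRp : 0 < R_p) (hrD : 0 ≤ r_D) :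
    AntitoneOn (fun μ : ℝ =>
      Real.exp (-μ * (π * r_D ^ 2)) *
        (1 - Real.exp (-μ * (π * (r_I ^ 2 - Jfun r_I R_p r_D)))) /
        (1 - Real.exp (-μ * (π * r_I ^ 2))))
      (Set.Ioi (0:ℝ)) := by
  have hJ₀ : 0 ≤ Jfun r_I R_p r_D := Jfun_nonneg hrD
  have hJI : Jfun r_I R_p r_D ≤ r_I ^ 2 := Jfun_le_rI_sq hrI.le hRp hrD
  have hJD : Jfun r_I R_p r_D ≤ r_D ^ 2 := Jfun_le_rD_sq hRp.le hrD
  apply antitoneOn_exp_mul_one_sub_exp_div_one_sub_exp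
  · exact mul_nonneg pi_nonneg (sub_nonneg.2 hJI)
  · exact mul_le_mul_of_nonneg_left (sub_le_self _ hJ₀) pi_nonneg
  · positivity
  · rw [← mul_add]
    exact mul_le_mul_of_nonneg_left (by linarith) pi_nonneg
end
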